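/- Let (x(A))_{A} and (z_{A₀}(A₁))_{A₀,A₁} be nonnegative weights on finite subsets of {1,…,n} satisfying: (a) z_{A₀}(A₁) = 0 unless dist(A₀, A₁) ≤ 1; (b) Σ_{A₁} ⟨|min A₀ − min A₁|₊⟩^{1+α} z_{A₀}(A₁) ≤ C uniformly in A₀; (c) Σ_{τ>0} ⟨τ⟩^{1+α} sup_{τ₀−τ₁=τ} sup_{A₀: min A₀ = τ₀} Σ_{A₁: min A₁ = τ₁} z_{A₀}(A₁) ≤ C; and (d) Σ_{A₀: min A₀ ≤ ñ} ⟨ñ − min A₀⟩^{α} x(A₀) ≤ C and Σ_{A₀: min A₀ = τ₀} x(A₀) ≤ C uniformly in τ₀. Then Σ_{A₀, A₁: min(A₀∪A₁) ≤ ñ} ⟨ñ − min(A₀∪A₁)⟩^{α} x(A₀) z_{A₀}(A₁) ≤ C', for a constant C' depending only on C and α > 0. -/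

import Mathlib

/-! Write `a = min A₀`, `b = min A₁`, so that `min (A₀ ∪ A₁) = min a b`. If `a ≤ ñ`, then
`⟨ñ - min a b⟩ ≤ √2 ⟨ñ - a⟩ ⟨(a - b)₊⟩`; summing over `A₁` with (b) and then over `A₀` with (d)
gives `√2^α C²`. If `b ≤ ñ < a`, then `⟨ñ - b⟩ ≤ ⟨a - b⟩`; summing over `A₁` in fibres of `b`
with (c) and over `A₀` in fibres of `a` with the uniform bound of (d) leaves
`C ∑_{b ≤ ñ < a} ⟨a - b⟩^α s (a - b)`, where each difference `τ` occurs at most `τ` times, so this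
is at most `C ∑ τ ⟨τ⟩^α s τ ≤ C²`. -/

open Finset

/-- Japanese bracket. -/
noncomputable def jbracket (x : ℝ) : ℝ := Real.sqrt (x ^ 2 + 1)

/-- minimum of a finite set of naturals (`0` for the empty set). -/
def minOf (A : Finset ℕ) : ℕ := WithTop.untopD 0 A.min

/-- Two finite subsets of `ℕ` are within distance `1` of each other. -/
def Close (A B : Finset ℕ) : Prop := ∃ a ∈ A, ∃ b ∈ B, ((a : ℤ) - b).natAbs ≤ 1

lemma jbracket_pos (x : ℝ) : 0 < jbracket x := Real.sqrt_pos.2 (by positivity)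

lemma one_le_jbracket (x : ℝ) : 1 ≤ jbracket x :=
  Real.one_le_sqrt.2 (by nlinarith [sq_nonneg x])

lemma le_jbracket (x : ℝ) : x ≤ jbracket x :=
  (le_abs_self x).trans (Real.abs_le_sqrt (by linarith))

lemma jbracket_le_jbracket {a b : ℝ} (ha : 0 ≤ a) (hab : a ≤ b) : jbracket a ≤ jbracket b :=
  Real.sqrt_le_sqrt (by nlinarith)

lemma jbracket_add_le (a b : ℝ) : jbracket (a + b) ≤ Real.sqrt 2 * jbracket a * jbracket b := by
  rw [jbracket, jbracket, jbracket, ← Real.sqrt_mul zero_le_two, ← Real.sqrt_mul (by positivity)]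
  exact Real.sqrt_le_sqrt (by nlinarith [sq_nonneg (a - b), sq_nonneg (a * b)])

lemma mul_rpow_jbracket_le (x α : ℝ) : x * jbracket x ^ α ≤ jbracket x ^ (1 + α) := by
  rw [Real.rpow_add (jbracket_pos x), Real.rpow_one]
  exact mul_le_mul_of_nonneg_right (le_jbracket x) (Real.rpow_nonneg (jbracket_pos x).le α)

lemma jbracket_sub_min_rpow_le {α : ℝ} (hα : 0 ≤ α) (a b c : ℕ) :
    jbracket ((c : ℝ) - (min a b : ℕ)) ^ α ≤
      Real.sqrt 2 ^ α * jbracket ((c : ℝ) - a) ^ α * jbracket (max ((a : ℝ) - b) 0) ^ (1 + α) := by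
  have hsplit : (c : ℝ) - (min a b : ℕ) = ((c : ℝ) - a) + max ((a : ℝ) - b) 0 := by
    rcases le_total a b with hab | hab
    · rw [min_eq_left hab, max_eq_right (by simpa using hab)]; ring
    · rw [min_eq_right hab, max_eq_left (by simpa using hab)]; ring
  calc jbracket ((c : ℝ) - (min a b : ℕ)) ^ α
      ≤ (Real.sqrt 2 * jbracket ((c : ℝ) - a) * jbracket (max ((a : ℝ) - b) 0)) ^ α := by
        rw [hsplit]
        exact Real.rpow_le_rpow (jbracket_pos _).le (jbracket_add_le _ _) hα
    _ = Real.sqrt 2 ^ α * jbracket ((c : ℝ) - a) ^ α * jbracket (max ((a : ℝ) - b) 0) ^ α := by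
        rw [Real.mul_rpow (mul_nonneg (Real.sqrt_nonneg 2) (jbracket_pos _).le) (jbracket_pos _).le,
          Real.mul_rpow (Real.sqrt_nonneg 2) (jbracket_pos _).le]
    _ ≤ _ :=
        mul_le_mul_of_nonneg_left
          (Real.rpow_le_rpow_of_exponent_le (one_le_jbracket _) (by linarith))
          (mul_nonneg (Real.rpow_nonneg (Real.sqrt_nonneg 2) α)
            (Real.rpow_nonneg (jbracket_pos _).le α))

lemma minOf_eq {A : Finset ℕ} {a : ℕ} (h : A.min = a) : minOf A = a := by
  rw [minOf, h]
  rfl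

lemma minOf_mem {A : Finset ℕ} (hA : A.Nonempty) : minOf A ∈ A := by
  obtain ⟨a, ha⟩ := Finset.min_of_nonempty hA
  rw [minOf_eq ha]
  exact Finset.mem_of_min ha

lemma minOf_union {A B : Finset ℕ} (hA : A.Nonempty) (hB : B.Nonempty) :
    minOf (A ∪ B) = min (minOf A) (minOf B) := by
  obtain ⟨a, ha⟩ := Finset.min_of_nonempty hA
  obtain ⟨b, hb⟩ := Finset.min_of_nonempty hB
  have hab : (A ∪ B).min = (min a b : ℕ) := by
    rw [Finset.min_union, ha, hb]
    exact (WithTop.coe_min a b).symm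
  rw [minOf_eq ha, minOf_eq hb, minOf_eq hab]

lemma ite_min_le_eq_add (a b c : ℕ) (g : ℕ → ℝ) :
    (if min a b ≤ c then g (min a b) else 0) =
      (if a ≤ c then g (min a b) else 0) + (if c < a ∧ b ≤ c then g b else 0) := by
  by_cases hac : a ≤ c
  · have hmin : min a b ≤ c := by omega
    simp [hac, hmin, not_lt.2 hac]
  · by_cases hbc : b ≤ c
    · have hba : min a b = b := by omega
      simp [hac, hbc, hba, not_le.1 hac]
    · have hmin : ¬ min a b ≤ c := by omega
      simp [hac, hbc, hmin]

lemma card_filter_sub_eq_le (m n k : ℕ) :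
    #((Ioc m n ×ˢ Iic m).filter (fun p => p.1 - p.2 = k)) ≤ k := by
  calc #((Ioc m n ×ˢ Iic m).filter (fun p => p.1 - p.2 = k))
      ≤ #(Ioc m (m + k)) := by
        refine card_le_card_of_injOn Prod.fst (fun p hp => ?_) (fun p hp q hq hpq => ?_)
        · simp only [coe_filter, mem_product, mem_Ioc, mem_Iic, Set.mem_ofPred_eq] at hp
          simp only [coe_Ioc, Set.mem_Ioc]
          omega
        · simp only [coe_filter, mem_product, mem_Ioc, mem_Iic, Set.mem_ofPred_eq] at hp hq
          exact Prod.ext hpq (by omega)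
    _ = k := by simp

lemma sum_Ioc_sum_Iic_sub_le (m n : ℕ) {f : ℕ → ℝ} (hf : ∀ k, 0 ≤ f k) :
    ∑ i ∈ Ioc m n, ∑ j ∈ Iic m, f (i - j) ≤ ∑ k ∈ Icc 1 n, (k : ℝ) * f k := by
  have hmaps : ∀ p ∈ Ioc m n ×ˢ Iic m, p.1 - p.2 ∈ Icc 1 n := by
    intro p hp
    simp only [mem_product, mem_Ioc, mem_Iic] at hp
    simp only [mem_Icc]
    omega
  rw [← sum_product' (f := fun i j => f (i - j)), ← sum_fiberwise_of_maps_to hmaps]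
  refine sum_le_sum fun k _ => ?_
  calc ∑ p ∈ (Ioc m n ×ˢ Iic m).filter (fun p => p.1 - p.2 = k), f (p.1 - p.2)
      ≤ #((Ioc m n ×ˢ Iic m).filter (fun p => p.1 - p.2 = k)) • f k :=
        sum_le_card_nsmul _ _ _ fun p hp => by rw [(mem_filter.1 hp).2]
    _ ≤ (k : ℝ) * f k := by
        rw [nsmul_eq_mul]
        gcongr
        · exact hf k
        · exact_mod_cast card_filter_sub_eq_le m n k

lemma sum_filter_mul_le_of_sum_fiber_le {ι κ : Type*} [DecidableEq κ] {S : Finset ι}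
    {T : Finset κ} {m : ι → κ} {y : ι → ℝ} {w B : κ → ℝ} (hw : ∀ τ ∈ T, 0 ≤ w τ)
    (hB : ∀ τ ∈ T, ∑ i ∈ S with m i = τ, y i ≤ B τ) :
    ∑ i ∈ S with m i ∈ T, y i * w (m i) ≤ ∑ τ ∈ T, B τ * w τ := by
  rw [← sum_fiberwise_eq_sum_filter]
  refine sum_le_sum fun τ hτ => ?_
  calc ∑ i ∈ S with m i = τ, y i * w (m i) = (∑ i ∈ S with m i = τ, y i) * w τ := by
        rw [sum_mul]
        exact sum_congr rfl fun i hi => by rw [(mem_filter.1 hi).2]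
    _ ≤ B τ * w τ := mul_le_mul_of_nonneg_right (hB τ hτ) (hw τ hτ)

section TwoScale

variable {ι : Type*} {S : Finset ι} {m : ι → ℕ} {x : ι → ℝ} {z : ι → ι → ℝ} {N : ℕ} {α : ℝ}

lemma sum_case_fst_le {Cb Cd : ℝ} (hα : 0 ≤ α) (hx : ∀ i, 0 ≤ x i) (hz : ∀ i j, 0 ≤ z i j)
    (hCb : 0 ≤ Cb)
    (hb : ∀ i ∈ S, ∑ j ∈ S, jbracket (max ((m i : ℝ) - m j) 0) ^ (1 + α) * z i j ≤ Cb)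
    (hd : ∑ i ∈ S with m i ≤ N, jbracket ((N : ℝ) - m i) ^ α * x i ≤ Cd) :
    ∑ i ∈ S, ∑ j ∈ S, (if m i ≤ N then
        jbracket ((N : ℝ) - (min (m i) (m j) : ℕ)) ^ α * x i * z i j else 0) ≤
      Real.sqrt 2 ^ α * Cb * Cd := by
  have hK : 0 ≤ Real.sqrt 2 ^ α := Real.rpow_nonneg (Real.sqrt_nonneg 2) α
  have inner : ∀ i ∈ S, ∑ j ∈ S, jbracket ((N : ℝ) - (min (m i) (m j) : ℕ)) ^ α * x i * z i j ≤
      Real.sqrt 2 ^ α * Cb * (jbracket ((N : ℝ) - m i) ^ α * x i) := by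
    intro i hi
    set c := Real.sqrt 2 ^ α * jbracket ((N : ℝ) - m i) ^ α * x i
    have hc : 0 ≤ c := mul_nonneg (mul_nonneg hK (Real.rpow_nonneg (jbracket_pos _).le α)) (hx i)
    calc ∑ j ∈ S, jbracket ((N : ℝ) - (min (m i) (m j) : ℕ)) ^ α * x i * z i j
        ≤ ∑ j ∈ S, c * (jbracket (max ((m i : ℝ) - m j) 0) ^ (1 + α) * z i j) := by
          refine sum_le_sum fun j _ => ?_
          calc jbracket ((N : ℝ) - (min (m i) (m j) : ℕ)) ^ α * x i * z i j
              ≤ (Real.sqrt 2 ^ α * jbracket ((N : ℝ) - m i) ^ α *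
                  jbracket (max ((m i : ℝ) - m j) 0) ^ (1 + α)) * x i * z i j := by
                gcongr
                · exact hz i j
                · exact hx i
                · exact jbracket_sub_min_rpow_le hα (m i) (m j) N
            _ = c * (jbracket (max ((m i : ℝ) - m j) 0) ^ (1 + α) * z i j) := by ring
      _ ≤ c * Cb := by rw [← mul_sum]; exact mul_le_mul_of_nonneg_left (hb i hi) hc
      _ = _ := by ring
  calc ∑ i ∈ S, ∑ j ∈ S, (if m i ≤ N then
        jbracket ((N : ℝ) - (min (m i) (m j) : ℕ)) ^ α * x i * z i j else 0)
      = ∑ i ∈ S with m i ≤ N, ∑ j ∈ S,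
          jbracket ((N : ℝ) - (min (m i) (m j) : ℕ)) ^ α * x i * z i j := by
        simp_rw [sum_filter, ite_sum_zero]
    _ ≤ ∑ i ∈ S with m i ≤ N, Real.sqrt 2 ^ α * Cb * (jbracket ((N : ℝ) - m i) ^ α * x i) :=
        sum_le_sum fun i hi => inner i (mem_filter.1 hi).1
    _ ≤ Real.sqrt 2 ^ α * Cb * Cd := by
        rw [← mul_sum]
        exact mul_le_mul_of_nonneg_left hd (mul_nonneg hK hCb)

lemma sum_case_snd_le_lt_fst {n : ℕ} {s : ℕ → ℝ} {Cx Cs : ℝ} (hα : 0 ≤ α) (hx : ∀ i, 0 ≤ x i)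
    (hz : ∀ i j, 0 ≤ z i j) (hs : ∀ τ, 0 ≤ s τ) (hm : ∀ i ∈ S, m i ≤ n)
    (hc : ∀ i ∈ S, ∀ τ, ∑ j ∈ S with m j = τ, z i j ≤ s (m i - τ))
    (hsC : ∑ τ ∈ Icc 1 n, jbracket τ ^ (1 + α) * s τ ≤ Cs)
    (hd : ∀ τ, ∑ i ∈ S with m i = τ, x i ≤ Cx) :
    ∑ i ∈ S, ∑ j ∈ S, (if N < m i ∧ m j ≤ N then
        jbracket ((N : ℝ) - m j) ^ α * x i * z i j else 0) ≤ Cx * Cs := by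
  set f : ℕ → ℝ := fun τ => jbracket τ ^ α * s τ with hf_def
  have hf : ∀ τ, 0 ≤ f τ := fun τ => mul_nonneg (Real.rpow_nonneg (jbracket_pos _).le α) (hs τ)
  have hCx : 0 ≤ Cx := (sum_nonneg fun i _ => hx i).trans (hd 0)
  have inner : ∀ i ∈ S, N < m i → ∑ j ∈ S, (if N < m i ∧ m j ≤ N then
      jbracket ((N : ℝ) - m j) ^ α * x i * z i j else 0) ≤ x i * ∑ τ ∈ Iic N, f (m i - τ) := by
    intro i hi hNi
    have hw : ∀ j, m j ≤ N →
        jbracket ((N : ℝ) - m j) ^ α ≤ jbracket ((m i - m j : ℕ) : ℝ) ^ α := by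
      intro j hj
      refine Real.rpow_le_rpow (jbracket_pos _).le (jbracket_le_jbracket ?_ ?_) hα
      · simpa using hj
      · rw [Nat.cast_sub (by omega)]
        gcongr
    calc ∑ j ∈ S, (if N < m i ∧ m j ≤ N then jbracket ((N : ℝ) - m j) ^ α * x i * z i j else 0)
        = x i * ∑ j ∈ S with m j ∈ Iic N, z i j * jbracket ((N : ℝ) - m j) ^ α := by
          rw [mul_sum, sum_filter]
          refine sum_congr rfl fun j _ => ?_
          simp only [mem_Iic, hNi, true_and]
          split_ifs <;> ring
      _ ≤ x i * ∑ j ∈ S with m j ∈ Iic N, z i j * jbracket ((m i - m j : ℕ) : ℝ) ^ α :=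
          mul_le_mul_of_nonneg_left (sum_le_sum fun j hj =>
            mul_le_mul_of_nonneg_left (hw j (mem_Iic.1 (mem_filter.1 hj).2)) (hz i j)) (hx i)
      _ ≤ x i * ∑ τ ∈ Iic N, s (m i - τ) * jbracket ((m i - τ : ℕ) : ℝ) ^ α :=
          mul_le_mul_of_nonneg_left
            (sum_filter_mul_le_of_sum_fiber_le (w := fun τ => jbracket ((m i - τ : ℕ) : ℝ) ^ α)
              (B := fun τ => s (m i - τ)) (fun τ _ => Real.rpow_nonneg (jbracket_pos _).le α)
              (fun τ _ => hc i hi τ))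
            (hx i)
      _ = x i * ∑ τ ∈ Iic N, f (m i - τ) := by simp only [hf_def, mul_comm]
  calc ∑ i ∈ S, ∑ j ∈ S, (if N < m i ∧ m j ≤ N then
        jbracket ((N : ℝ) - m j) ^ α * x i * z i j else 0)
      ≤ ∑ i ∈ S with m i ∈ Ioc N n, x i * ∑ τ ∈ Iic N, f (m i - τ) := by
        rw [sum_filter]
        refine sum_le_sum fun i hi => ?_
        split_ifs with h
        · exact inner i hi (mem_Ioc.1 h).1
        · have hNi : ¬ N < m i := fun h' => h (mem_Ioc.2 ⟨h', hm i hi⟩)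
          simp [hNi]
    _ ≤ ∑ τ₀ ∈ Ioc N n, Cx * ∑ τ ∈ Iic N, f (τ₀ - τ) :=
        sum_filter_mul_le_of_sum_fiber_le (w := fun τ₀ => ∑ τ ∈ Iic N, f (τ₀ - τ))
          (B := fun _ => Cx) (fun τ₀ _ => sum_nonneg fun τ _ => hf _)
          (fun τ₀ _ => hd τ₀)
    _ ≤ Cx * ∑ k ∈ Icc 1 n, (k : ℝ) * f k := by
        rw [← mul_sum]
        exact mul_le_mul_of_nonneg_left (sum_Ioc_sum_Iic_sub_le N n hf) hCx
    _ ≤ Cx * Cs := by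
        refine mul_le_mul_of_nonneg_left ((sum_le_sum fun k _ => ?_).trans hsC) hCx
        rw [hf_def, ← mul_assoc]
        exact mul_le_mul_of_nonneg_right (mul_rpow_jbracket_le _ _) (hs k)

end TwoScale

theorem two_scale_summation_general (α C : ℝ) (hα : 0 < α) :
    ∃ C' > 0, ∀ (n ntil : ℕ), ntil ≤ n →
      ∀ (x : Finset ℕ → ℝ) (z : Finset ℕ → Finset ℕ → ℝ) (s : ℕ → ℝ),
      (∀ A₀, 0 ≤ x A₀) → (∀ A₀ A₁, 0 ≤ z A₀ A₁) → (∀ τ, 0 ≤ s τ) →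
      -- (a) locality
      (∀ A₀ A₁, ¬ Close A₀ A₁ → z A₀ A₁ = 0) →
      -- (b) decay in |min A₀ − min A₁|₊
      (∀ A₀ ∈ (Finset.Icc 1 n).powerset.filter (fun A => A.Nonempty),
        (∑ A₁ ∈ (Finset.Icc 1 n).powerset.filter (fun A => A.Nonempty),
          (jbracket (max ((minOf A₀ : ℝ) - (minOf A₁ : ℝ)) 0)) ^ (1 + α) * z A₀ A₁) ≤ C) →
      -- (c) translation-uniform decay, encoded by a majorant `s`
      (∀ (τ τ₀ τ₁ : ℕ) (A₀ : Finset ℕ), τ₀ - τ₁ = τ → minOf A₀ = τ₀ →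
        (∑ A₁ ∈ ((Finset.Icc 1 n).powerset.filter
            (fun A => A.Nonempty ∧ minOf A = τ₁)), z A₀ A₁) ≤ s τ) →
      ((∑ τ ∈ Finset.Icc 1 n, (jbracket τ) ^ (1 + α) * s τ) ≤ C) →
      -- (d) bounds on the boundary weights x
      ((∑ A₀ ∈ ((Finset.Icc 1 n).powerset.filter
          (fun A => A.Nonempty ∧ minOf A ≤ ntil)),
        (jbracket ((ntil : ℝ) - (minOf A₀ : ℝ))) ^ α * x A₀) ≤ C) →
      (∀ τ₀ : ℕ, (∑ A₀ ∈ ((Finset.Icc 1 n).powerset.filter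
          (fun A => A.Nonempty ∧ minOf A = τ₀)), x A₀) ≤ C) →
      -- conclusion
      (∑ A₀ ∈ (Finset.Icc 1 n).powerset.filter (fun A => A.Nonempty),
        ∑ A₁ ∈ (Finset.Icc 1 n).powerset.filter (fun A => A.Nonempty),
          (if minOf (A₀ ∪ A₁) ≤ ntil then
            (jbracket ((ntil : ℝ) - (minOf (A₀ ∪ A₁) : ℝ))) ^ α * x A₀ * z A₀ A₁
           else 0)) ≤ C' := by
  refine ⟨(Real.sqrt 2 ^ α + 1) * C ^ 2 + 1, by positivity, ?_⟩
  intro n ntil _ x z s hx hz hs _ hb hc hsC hd1 hd2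
  set S := (Finset.Icc 1 n).powerset.filter (fun A => A.Nonempty)
  have hC : 0 ≤ C := (sum_nonneg fun A _ => hx A).trans (hd2 0)
  have hS : ∀ A ∈ S, A.Nonempty ∧ minOf A ≤ n := by
    intro A hA
    obtain ⟨hsub, hne⟩ := mem_filter.1 hA
    exact ⟨hne, (mem_Icc.1 (mem_powerset.1 hsub (minOf_mem hne))).2⟩
  have hfilter : ∀ (p : Finset ℕ → Prop) [DecidablePred p],
      S.filter p = (Finset.Icc 1 n).powerset.filter (fun A => A.Nonempty ∧ p A) :=
    fun p _ => filter_filter _ _ _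
  have hnear := sum_case_fst_le (Cd := C) (N := ntil) hα.le hx hz hC hb (by rw [hfilter]; exact hd1)
  have hfar := sum_case_snd_le_lt_fst (Cx := C) (N := ntil) hα.le hx hz hs (fun A hA => (hS A hA).2)
    (fun A₀ _ τ => by rw [hfilter]; exact hc _ _ τ A₀ rfl rfl) hsC
    (fun τ => by rw [hfilter]; exact hd2 τ)
  refine (le_of_eq ?_).trans ((add_le_add hnear hfar).trans ?_)
  · simp_rw [← sum_add_distrib]
    refine sum_congr rfl fun A₀ h₀ => sum_congr rfl fun A₁ h₁ => ?_
    rw [minOf_union (hS A₀ h₀).1 (hS A₁ h₁).1]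
    exact ite_min_le_eq_add _ _ _ fun k => jbracket ((ntil : ℝ) - k) ^ α * x A₀ * z A₀ A₁
  · nlinarith

/-- Abstract two-scale summation lemma (proof of item 5): given nonnegative weights
`x(A₀)` and `z_{A₀}(A₁)` on nonempty subsets of `{1,…,n}` satisfying the locality,
decay and translation-uniform bounds (a)–(d), the weighted double sum over pairs with
`min(A₀ ∪ A₁) ≤ ntil` is bounded by a constant depending only on `C` and `α`. -/
theorem two_scale_summation (α C : ℝ) (hα : 0 < α) (hC : 0 < C) :
    ∃ C' > 0, ∀ (n ntil : ℕ), ntil ≤ n →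
      ∀ (x : Finset ℕ → ℝ) (z : Finset ℕ → Finset ℕ → ℝ) (s : ℕ → ℝ),
      (∀ A₀, 0 ≤ x A₀) → (∀ A₀ A₁, 0 ≤ z A₀ A₁) → (∀ τ, 0 ≤ s τ) →
      -- (a) locality
      (∀ A₀ A₁, ¬ Close A₀ A₁ → z A₀ A₁ = 0) →
      -- (b) decay in |min A₀ − min A₁|₊
      (∀ A₀ ∈ (Finset.Icc 1 n).powerset.filter (fun A => A.Nonempty),
        (∑ A₁ ∈ (Finset.Icc 1 n).powerset.filter (fun A => A.Nonempty),
          (jbracket (max ((minOf A₀ : ℝ) - (minOf A₁ : ℝ)) 0)) ^ (1 + α) * z A₀ A₁) ≤ C) →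
      -- (c) translation-uniform decay, encoded by a majorant `s`
      (∀ (τ τ₀ τ₁ : ℕ) (A₀ : Finset ℕ), τ₀ - τ₁ = τ → minOf A₀ = τ₀ →
        (∑ A₁ ∈ ((Finset.Icc 1 n).powerset.filter
            (fun A => A.Nonempty ∧ minOf A = τ₁)), z A₀ A₁) ≤ s τ) →
      ((∑ τ ∈ Finset.Icc 1 n, (jbracket τ) ^ (1 + α) * s τ) ≤ C) →
      -- (d) bounds on the boundary weights x
      ((∑ A₀ ∈ ((Finset.Icc 1 n).powerset.filter
          (fun A => A.Nonempty ∧ minOf A ≤ ntil)),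
        (jbracket ((ntil : ℝ) - (minOf A₀ : ℝ))) ^ α * x A₀) ≤ C) →
      (∀ τ₀ : ℕ, (∑ A₀ ∈ ((Finset.Icc 1 n).powerset.filter
          (fun A => A.Nonempty ∧ minOf A = τ₀)), x A₀) ≤ C) →
      -- conclusion
      (∑ A₀ ∈ (Finset.Icc 1 n).powerset.filter (fun A => A.Nonempty),
        ∑ A₁ ∈ (Finset.Icc 1 n).powerset.filter (fun A => A.Nonempty),
          (if minOf (A₀ ∪ A₁) ≤ ntil then
            (jbracket ((ntil : ℝ) - (minOf (A₀ ∪ A₁) : ℝ))) ^ α * x A₀ * z A₀ A₁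
           else 0)) ≤ C' :=
  two_scale_summation_general α C hα
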